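/- arXiv:1509.06225 — 6 statements merged into one kernel-verified Lean document; each statement's English description precedes it below -/
import Mathlib

section
/- Let Y be an n×m matrix with natural-number entries, M an n×m real matrix, and H a set of off-diagonal index pairs. Consider the family F of supports of all Kirchhoff matrices A for which some (D, A) is a linearly conjugate realization of (Y, M) with A_{ij} = 0 for every (i, j) ∈ H. If F is nonempty, then F has a maximum element with respect to set inclusion; that is, there exists a realization (D*, A*) satisfying the exclusion constraints whose support contains the support of every realization satisfying them, and this maximal support equals the union of all members of F. -/
/-- A Kirchhoff matrix: nonnegative off-diagonal entries, zero column sums. -/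
def IsKirchhoff {m : ℕ} (A : Matrix (Fin m) (Fin m) ℝ) : Prop :=
  (∀ i j, i ≠ j → 0 ≤ A i j) ∧ ∀ j, ∑ i, A i j = 0

/-- The support (reaction graph structure) of a matrix: off-diagonal positive entries. -/
def kirchhoffSupport {m : ℕ} (A : Matrix (Fin m) (Fin m) ℝ) : Set (Fin m × Fin m) :=
  {p | p.1 ≠ p.2 ∧ 0 < A p.1 p.2}

/-- A linearly conjugate realization of (Y, M): D positive diagonal, A Kirchhoff, Y·A = D·M. -/
def IsLinConjReal {n m : ℕ} (Y : Matrix (Fin n) (Fin m) ℕ) (M : Matrix (Fin n) (Fin m) ℝ)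
    (D : Matrix (Fin n) (Fin n) ℝ) (A : Matrix (Fin m) (Fin m) ℝ) : Prop :=
  D.IsDiag ∧ (∀ i, 0 < D i i) ∧ IsKirchhoff A ∧
    (Y.map (Nat.cast : ℕ → ℝ)) * A = D * M

/-- The monomial map associated with Y. -/
def psi {n m : ℕ} (Y : Matrix (Fin n) (Fin m) ℕ) (x : Fin n → ℝ) : Fin m → ℝ :=
  fun j => ∏ i, x i ^ Y i j

theorem constrained_dense_realization_superstructure {n m : ℕ}
    (Y : Matrix (Fin n) (Fin m) ℕ) (M : Matrix (Fin n) (Fin m) ℝ)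
    (H : Set (Fin m × Fin m)) (hH : ∀ p ∈ H, p.1 ≠ p.2)
    (hne : ∃ D A, IsLinConjReal Y M D A ∧ ∀ p ∈ H, A p.1 p.2 = 0) :
    ∃ Dstar Astar, (IsLinConjReal Y M Dstar Astar ∧ ∀ p ∈ H, Astar p.1 p.2 = 0) ∧
      (∀ D A, IsLinConjReal Y M D A → (∀ p ∈ H, A p.1 p.2 = 0) →
        kirchhoffSupport A ⊆ kirchhoffSupport Astar) ∧
      kirchhoffSupport Astar =
        ⋃₀ {S | ∃ D A, IsLinConjReal Y M D A ∧ (∀ p ∈ H, A p.1 p.2 = 0) ∧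
              kirchhoffSupport A = S} := by
  classical
  obtain ⟨D0, A0, hR0, hZ0⟩ := hne
  set T : Set (Fin m × Fin m) :=
    {p | ∃ D A, IsLinConjReal Y M D A ∧ (∀ q ∈ H, A q.1 q.2 = 0) ∧ p ∈ kirchhoffSupport A}
    with hT
  have hf : ∀ p : Fin m × Fin m, ∃ D A, IsLinConjReal Y M D A ∧
      (∀ q ∈ H, A q.1 q.2 = 0) ∧ (p ∈ T → p ∈ kirchhoffSupport A) := by
    intro p
    by_cases hp : p ∈ T
    · obtain ⟨D, A, h1, h2, h3⟩ := hp
      exact ⟨D, A, h1, h2, fun _ => h3⟩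
    · exact ⟨D0, A0, hR0, hZ0, fun h => absurd h hp⟩
  choose Df Af hreal hzero hsup using hf
  refine ⟨D0 + ∑ p, Df p, A0 + ∑ p, Af p, ?_, ?_, ?_⟩
  · constructor
    · refine ⟨?_, ?_, ⟨?_, ?_⟩, ?_⟩
      · intro i j hij
        have h0 : D0 i j = 0 := hR0.1 hij
        have : ∀ p, Df p i j = 0 := fun p => (hreal p).1 hij
        simp [Matrix.add_apply, Matrix.sum_apply, h0, this]
      · intro i
        have h0 : 0 < D0 i i := hR0.2.1 i
        have hs : 0 ≤ ∑ p, Df p i i :=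
          Finset.sum_nonneg fun p _ => le_of_lt ((hreal p).2.1 i)
        have : (D0 + ∑ p, Df p) i i = D0 i i + ∑ p, Df p i i := by
          simp [Matrix.add_apply, Matrix.sum_apply]
        rw [this]; linarith
      · intro i j hij
        have h0 : 0 ≤ A0 i j := hR0.2.2.1.1 i j hij
        have hs : 0 ≤ ∑ p, Af p i j :=
          Finset.sum_nonneg fun p _ => (hreal p).2.2.1.1 i j hij
        have : (A0 + ∑ p, Af p) i j = A0 i j + ∑ p, Af p i j := by
          simp [Matrix.add_apply, Matrix.sum_apply]
        rw [this]; linarith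
      · intro j
        have h0 := hR0.2.2.1.2 j
        have hs : ∀ p, ∑ i, Af p i j = 0 := fun p => (hreal p).2.2.1.2 j
        simp [Matrix.add_apply, Matrix.sum_apply, Finset.sum_add_distrib, h0]
        rw [Finset.sum_comm]
        simp [hs]
      · rw [Matrix.mul_add, Matrix.add_mul, Matrix.mul_sum, Matrix.sum_mul,
          hR0.2.2.2]
        congr 1
        exact Finset.sum_congr rfl fun p _ => (hreal p).2.2.2
    · intro p hp
      have h0 := hZ0 p hp
      have hs : ∀ q, Af q p.1 p.2 = 0 := fun q => hzero q p hp
      simp [Matrix.add_apply, Matrix.sum_apply, h0, hs]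
  · intro D A hA hAz p hp
    have hpT : p ∈ T := ⟨D, A, hA, hAz, hp⟩
    have hmem := hsup p hpT
    refine ⟨hp.1, ?_⟩
    have h0 : 0 ≤ A0 p.1 p.2 := hR0.2.2.1.1 p.1 p.2 hp.1
    have hs : Af p p.1 p.2 ≤ ∑ q, Af q p.1 p.2 :=
      Finset.single_le_sum (f := fun q => Af q p.1 p.2)
        (fun q _ => (hreal q).2.2.1.1 p.1 p.2 hp.1) (Finset.mem_univ p)
    have hpos : 0 < Af p p.1 p.2 := hmem.2
    have : (A0 + ∑ q, Af q) p.1 p.2 = A0 p.1 p.2 + ∑ q, Af q p.1 p.2 := by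
      simp [Matrix.add_apply, Matrix.sum_apply]
    rw [this]; linarith
  · apply Set.Subset.antisymm
    · intro p hp
      have hne12 : p.1 ≠ p.2 := hp.1
      have hpos : 0 < A0 p.1 p.2 + ∑ q, Af q p.1 p.2 := by
        have : (A0 + ∑ q, Af q) p.1 p.2 = A0 p.1 p.2 + ∑ q, Af q p.1 p.2 := by
          simp [Matrix.add_apply, Matrix.sum_apply]
        rw [← this]; exact hp.2
      by_cases h0 : 0 < A0 p.1 p.2
      · exact ⟨kirchhoffSupport A0, ⟨D0, A0, hR0, hZ0, rfl⟩, hne12, h0⟩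
      · have hA0 : A0 p.1 p.2 = 0 :=
          le_antisymm (not_lt.mp h0) (hR0.2.2.1.1 p.1 p.2 hne12)
        have : 0 < ∑ q, Af q p.1 p.2 := by linarith
        obtain ⟨q, _, hq⟩ : ∃ q ∈ Finset.univ, 0 < Af q p.1 p.2 := by
          by_contra hc
          push_neg at hc
          have : ∑ q, Af q p.1 p.2 ≤ 0 :=
            Finset.sum_nonpos fun q hqu => hc q hqu
          linarith
        exact ⟨kirchhoffSupport (Af q), ⟨Df q, Af q, hreal q, hzero q, rfl⟩, hne12, hq⟩
    · rintro p ⟨S, ⟨D, A, hA, hAz, rfl⟩, hpS⟩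
      have hpT : p ∈ T := ⟨D, A, hA, hAz, hpS⟩
      refine ⟨hpS.1, ?_⟩
      have hmem := hsup p hpT
      have h0 : 0 ≤ A0 p.1 p.2 := hR0.2.2.1.1 p.1 p.2 hpS.1
      have hs : Af p p.1 p.2 ≤ ∑ q, Af q p.1 p.2 :=
        Finset.single_le_sum (f := fun q => Af q p.1 p.2)
          (fun q _ => (hreal q).2.2.1.1 p.1 p.2 hpS.1) (Finset.mem_univ p)
      have : (A0 + ∑ q, Af q) p.1 p.2 = A0 p.1 p.2 + ∑ q, Af q p.1 p.2 := by
        simp [Matrix.add_apply, Matrix.sum_apply]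
      rw [this]
      have := hmem.2
      linarith
end

section
/- Let Y ∈ ℕ^{n×m}, M ∈ ℝ^{n×m}, let A be a Kirchhoff matrix and T ∈ ℝ^{n×n} a diagonal matrix with strictly positive diagonal entries such that Y·A = T⁻¹·M. Let Φ_T be the diagonal matrix with (Φ_T)_{jj} = ∏_i (T_{ii})^{Y_{ij}}, and set A' = A·Φ_T. Suppose x : ℝ → ℝ^n is differentiable, takes strictly positive values, and satisfies x'(t) = M·ψ(x(t)) for all t, where ψ is the monomial map associated with Y. Then A' is a Kirchhoff matrix and the transformed function x̄(t) = T⁻¹·x(t) satisfies x̄'(t) = Y·A'·ψ(x̄(t)) for all t. -/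
/-!
Writing `T = diag d`, the monomial map is multiplicative, so
`ψ(d⁻¹ x) = ψ(d)⁻¹ ψ(x)` and `Φ_T = diag ψ(d)`. Hence
`Y A' ψ(T⁻¹ x) = Y A ψ(x) = T⁻¹ M ψ(x)`, which is the derivative of the linear image `T⁻¹ x`.
Since `Φ_T` is a nonnegative diagonal matrix, `A' = A Φ_T` only rescales the columns of `A`,
so it stays Kirchhoff.
-/

open Matrix

theorem IsKirchhoff.mul_diagonal {m : ℕ} {A : Matrix (Fin m) (Fin m) ℝ} (hA : IsKirchhoff A)
    {c : Fin m → ℝ} (hc : ∀ j, 0 ≤ c j) : IsKirchhoff (A * diagonal c) := by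
  refine ⟨fun i j hij => ?_, fun j => ?_⟩
  · rw [Matrix.mul_diagonal]
    exact mul_nonneg (hA.1 i j hij) (hc j)
  · simp only [Matrix.mul_diagonal, ← Finset.sum_mul, hA.2 j, zero_mul]

theorem Matrix.inv_diagonal_of_ne_zero {ι K : Type*} [Fintype ι] [DecidableEq ι] [Field K]
    {d : ι → K} (hd : ∀ i, d i ≠ 0) : (diagonal d)⁻¹ = diagonal d⁻¹ :=
  inv_eq_left_inv (by simp [diagonal_mul_diagonal, hd])

theorem Matrix.diagonal_mulVec_eq_mul {ι α : Type*} [Fintype ι] [DecidableEq ι]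
    [NonUnitalNonAssocSemiring α] (d v : ι → α) : diagonal d *ᵥ v = d * v :=
  funext (mulVec_diagonal d v)

theorem HasDerivAt.matrix_mulVec {ι κ : Type*} [Fintype ι] [Fintype κ]
    {x : ℝ → ι → ℝ} {x' : ι → ℝ} {t : ℝ} (hx : HasDerivAt x x' t) (B : Matrix κ ι ℝ) :
    HasDerivAt (fun s => B *ᵥ x s) (B *ᵥ x') t :=
  (LinearMap.toContinuousLinearMap (mulVecLin B)).hasFDerivAt.comp_hasDerivAt t hx

section Psi

variable {n m : ℕ} (Y : Matrix (Fin n) (Fin m) ℕ)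

theorem psi_mul (u v : Fin n → ℝ) : psi Y (u * v) = psi Y u * psi Y v := by
  funext j
  simp only [psi, Pi.mul_apply, mul_pow, Finset.prod_mul_distrib]

theorem psi_one : psi Y 1 = 1 := by
  funext j
  simp [psi]

theorem psi_pos {v : Fin n → ℝ} (hv : ∀ i, 0 < v i) (j : Fin m) : 0 < psi Y v j :=
  Finset.prod_pos fun i _ => pow_pos (hv i) _

theorem diagonal_psi_mulVec_psi_diagonal_inv_mulVec {d : Fin n → ℝ} (hd : ∀ i, d i ≠ 0)
    (v : Fin n → ℝ) : diagonal (psi Y d) *ᵥ psi Y (diagonal d⁻¹ *ᵥ v) = psi Y v := by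
  have hdd : d * d⁻¹ = 1 := funext fun i => mul_inv_cancel₀ (hd i)
  rw [diagonal_mulVec_eq_mul, diagonal_mulVec_eq_mul, psi_mul, ← mul_assoc, ← psi_mul, hdd,
    psi_one, one_mul]

end Psi

theorem linear_conjugacy_dynamics_general {n m : ℕ}
    (Y : Matrix (Fin n) (Fin m) ℕ) (M : Matrix (Fin n) (Fin m) ℝ)
    (A : Matrix (Fin m) (Fin m) ℝ) (T : Matrix (Fin n) (Fin n) ℝ)
    (hA : IsKirchhoff A) (hTd : T.IsDiag) (hTp : ∀ i, 0 < T i i)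
    (hYA : (Y.map (Nat.cast : ℕ → ℝ)) * A = T⁻¹ * M)
    (Φ : Matrix (Fin m) (Fin m) ℝ)
    (hΦ : Φ = Matrix.diagonal (fun j => ∏ i, (T i i) ^ Y i j))
    (A' : Matrix (Fin m) (Fin m) ℝ) (hA' : A' = A * Φ)
    (x : ℝ → Fin n → ℝ)
    (hdyn : ∀ t, HasDerivAt x (M.mulVec (psi Y (x t))) t) :
    IsKirchhoff A' ∧
      ∀ t, HasDerivAt (fun s => T⁻¹.mulVec (x s))
        (((Y.map (Nat.cast : ℕ → ℝ)) * A').mulVec (psi Y (T⁻¹.mulVec (x t)))) t := by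
  obtain ⟨d, rfl⟩ : ∃ d, T = diagonal d := ⟨T.diag, hTd.diagonal_diag.symm⟩
  simp only [diagonal_apply_eq] at hTp hΦ
  have hΦ : Φ = diagonal (psi Y d) := hΦ
  have hTinv := inv_diagonal_of_ne_zero fun i => (hTp i).ne'
  subst hA' hΦ
  refine ⟨hA.mul_diagonal fun j => (psi_pos Y hTp j).le, fun t => ?_⟩
  have hfield : (Y.map (Nat.cast : ℕ → ℝ) * (A * diagonal (psi Y d))) *ᵥ
      psi Y ((diagonal d)⁻¹ *ᵥ x t) = (diagonal d)⁻¹ *ᵥ (M *ᵥ psi Y (x t)) := by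
    rw [← Matrix.mul_assoc, ← mulVec_mulVec, hTinv,
      diagonal_psi_mulVec_psi_diagonal_inv_mulVec Y fun i => (hTp i).ne', hYA, hTinv,
      ← mulVec_mulVec]
  rw [hfield]
  exact (hdyn t).matrix_mulVec _

theorem linear_conjugacy_dynamics {n m : ℕ}
    (Y : Matrix (Fin n) (Fin m) ℕ) (M : Matrix (Fin n) (Fin m) ℝ)
    (A : Matrix (Fin m) (Fin m) ℝ) (T : Matrix (Fin n) (Fin n) ℝ)
    (hA : IsKirchhoff A) (hTd : T.IsDiag) (hTp : ∀ i, 0 < T i i)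
    (hYA : (Y.map (Nat.cast : ℕ → ℝ)) * A = T⁻¹ * M)
    (Φ : Matrix (Fin m) (Fin m) ℝ)
    (hΦ : Φ = Matrix.diagonal (fun j => ∏ i, (T i i) ^ Y i j))
    (A' : Matrix (Fin m) (Fin m) ℝ) (hA' : A' = A * Φ)
    (x : ℝ → Fin n → ℝ) (hx : ∀ t i, 0 < x t i)
    (hdyn : ∀ t, HasDerivAt x (M.mulVec (psi Y (x t))) t) :
    IsKirchhoff A' ∧
      ∀ t, HasDerivAt (fun s => T⁻¹.mulVec (x s))
        (((Y.map (Nat.cast : ℕ → ℝ)) * A').mulVec (psi Y (T⁻¹.mulVec (x t)))) t :=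
  linear_conjugacy_dynamics_general Y M A T hA hTd hTp hYA Φ hΦ A' hA' x hdyn
end

section
/- Let Y ∈ ℕ^{n×m}, M ∈ ℝ^{n×m}, fix a column index j, and let H be a set of row indices not containing j. Call a vector v ∈ ℝ^m a feasible j-th column if v_i ≥ 0 for all i ≠ j, the entries of v sum to zero, Y·v equals the j-th column of M, and v_i = 0 for all i ∈ H; the support of v is the set of indices i ≠ j with v_i > 0. If there exists at least one feasible j-th column, then there exists a feasible j-th column whose support contains the support of every feasible j-th column (the super-structure property of dense realizations is inherited by the individual columns). -/
/-- A feasible j-th column with exclusion set H. -/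
def FeasibleCol {n m : ℕ} (Y : Matrix (Fin n) (Fin m) ℕ) (M : Matrix (Fin n) (Fin m) ℝ)
    (j : Fin m) (H : Set (Fin m)) (v : Fin m → ℝ) : Prop :=
  (∀ i, i ≠ j → 0 ≤ v i) ∧ (∑ i, v i = 0) ∧
    ((Y.map (Nat.cast : ℕ → ℝ)).mulVec v = fun i => M i j) ∧ ∀ i ∈ H, v i = 0

theorem dense_column_superstructure {n m : ℕ}
    (Y : Matrix (Fin n) (Fin m) ℕ) (M : Matrix (Fin n) (Fin m) ℝ)
    (j : Fin m) (H : Set (Fin m)) (hH : j ∉ H)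
    (hne : ∃ v, FeasibleCol Y M j H v) :
    ∃ v, FeasibleCol Y M j H v ∧
      ∀ w, FeasibleCol Y M j H w →
        {i | i ≠ j ∧ 0 < w i} ⊆ {i | i ≠ j ∧ 0 < v i} := by
  classical
  obtain ⟨v₀, hv₀⟩ := hne
  set u : Fin m → (Fin m → ℝ) := fun i =>
    if h : ∃ w, FeasibleCol Y M j H w ∧ 0 < w i then h.choose else v₀ with hu
  have hufeas : ∀ i, FeasibleCol Y M j H (u i) := by
    intro i
    by_cases h : ∃ w, FeasibleCol Y M j H w ∧ 0 < w i
    · simpa [hu, h] using h.choose_spec.1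
    · simpa [hu, h] using hv₀
  have hc : (0:ℝ) < (m + 1 : ℝ) := by positivity
  set c : ℝ := ((m:ℝ) + 1)⁻¹ with hcdef
  have hcpos : 0 < c := by positivity
  refine ⟨fun k => c * (v₀ k + ∑ i, u i k), ?_, ?_⟩
  · refine ⟨?_, ?_, ?_, ?_⟩
    · intro i hi
      have h1 : 0 ≤ v₀ i := hv₀.1 i hi
      have h2 : 0 ≤ ∑ t, u t i :=
        Finset.sum_nonneg fun t _ => (hufeas t).1 i hi
      positivity
    · have : ∑ k, (v₀ k + ∑ i, u i k) = 0 := by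
        rw [Finset.sum_add_distrib, hv₀.2.1, Finset.sum_comm]
        simp [fun i => (hufeas i).2.1]
      rw [← Finset.mul_sum, this, mul_zero]
    · funext r
      have hmv : ∀ (w : Fin m → ℝ), FeasibleCol Y M j H w →
          ∑ k, (Y.map (Nat.cast : ℕ → ℝ)) r k * w k = M r j := by
        intro w hw
        have := congrFun hw.2.2.1 r
        simpa [Matrix.mulVec, dotProduct] using this
      have : ∑ k, (Y.map (Nat.cast : ℕ → ℝ)) r k * (c * (v₀ k + ∑ i, u i k))
          = c * ((m:ℝ) + 1) * M r j := by
        have expand : ∀ k, (Y.map (Nat.cast : ℕ → ℝ)) r k * (c * (v₀ k + ∑ i, u i k))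
            = c * ((Y.map (Nat.cast : ℕ → ℝ)) r k * v₀ k
              + ∑ i, (Y.map (Nat.cast : ℕ → ℝ)) r k * u i k) := by
          intro k
          simp only [mul_add, Finset.mul_sum]
          congr 1
          · ring
          · exact Finset.sum_congr rfl fun i _ => by ring
        rw [Finset.sum_congr rfl fun k _ => expand k, ← Finset.mul_sum,
          Finset.sum_add_distrib, hmv v₀ hv₀, Finset.sum_comm]
        have : ∀ i : Fin m, ∑ k, (Y.map (Nat.cast : ℕ → ℝ)) r k * u i k = M r j :=
          fun i => hmv (u i) (hufeas i)
        rw [Finset.sum_congr rfl fun i _ => this i]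
        simp [Finset.sum_const]
        ring
      simpa [Matrix.mulVec, dotProduct, hcdef, inv_mul_cancel₀ (ne_of_gt hc)] using this
    · intro i hi
      have h1 : v₀ i = 0 := hv₀.2.2.2 i hi
      have h2 : ∀ t : Fin m, u t i = 0 := fun t => (hufeas t).2.2.2 i hi
      simp [h1, h2]
  · rintro w hw i ⟨hij, hwi⟩
    refine ⟨hij, ?_⟩
    have hex : ∃ w', FeasibleCol Y M j H w' ∧ 0 < w' i := ⟨w, hw, hwi⟩
    have hui : 0 < u i i := by
      simp only [hu, dif_pos hex]
      exact hex.choose_spec.2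
    have h1 : 0 ≤ v₀ i := hv₀.1 i hij
    have h2 : 0 < ∑ t, u t i :=
      Finset.sum_pos' (fun t _ => (hufeas t).1 i hij) ⟨i, Finset.mem_univ i, hui⟩
    exact mul_pos hcpos (by linarith)
end

section
/- Let E be a finite set and F a nonempty family of subsets of E satisfying: (i) there is D ∈ F with S ⊆ D for every S ∈ F; and (ii) for every R ∈ F and every e ∈ R, the subfamily F(R,e) = {W ∈ F : W ⊆ R \ {e}} is either empty or contains a maximum element (a member of F(R,e) containing every member of F(R,e)). Define the reachable members inductively: D is reachable, and whenever R is reachable, e ∈ R, and F(R,e) is nonempty, the maximum element of F(R,e) is reachable. Then every member of F is reachable. -/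
/-- Reachable members: `D` is reachable, and from a reachable `R` and `e ∈ R`, the maximum
element of `{W ∈ F | W ⊆ R \ {e}}` (when this subfamily is nonempty) is reachable. -/
inductive Reachable {α : Type*} (F : Set (Set α)) (D : Set α) : Set α → Prop
  | base : Reachable F D D
  | step (R : Set α) (e : α) (W : Set α) :
      Reachable F D R → e ∈ R → W ∈ F → W ⊆ R \ {e} →
      (∀ W' ∈ F, W' ⊆ R \ {e} → W' ⊆ W) → Reachable F D W

theorem enumeration_reaches_all {α : Type*} [Fintype α]
    (F : Set (Set α)) (hne : F.Nonempty)
    (D : Set α) (hD : D ∈ F) (hDmax : ∀ S ∈ F, S ⊆ D)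
    (hmax : ∀ R ∈ F, ∀ e ∈ R,
      (∀ W ∈ F, ¬ W ⊆ R \ {e}) ∨
      (∃ W ∈ F, W ⊆ R \ {e} ∧ ∀ W' ∈ F, W' ⊆ R \ {e} → W' ⊆ W)) :
    ∀ S ∈ F, Reachable F D S := by
  intro S hS
  suffices h : ∀ n R, R ∈ F → Reachable F D R → S ⊆ R → (R \ S).ncard = n →
      Reachable F D S from h _ D hD .base (hDmax S hS) rfl
  intro n
  induction n using Nat.strong_induction_on with
  | _ n ih =>
    intro R hR hRr hSR hcard
    by_cases hEq : R ⊆ S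
    · have : S = R := Set.Subset.antisymm hSR hEq
      rw [this]; exact hRr
    · obtain ⟨e, heR, heS⟩ := Set.not_subset.mp hEq
      have hSsub : S ⊆ R \ {e} := fun x hx =>
        ⟨hSR hx, by rintro rfl; exact heS hx⟩
      rcases hmax R hR e heR with h1 | ⟨W, hW, hWsub, hWmax⟩
      · exact absurd hSsub (h1 S hS)
      · have hSW : S ⊆ W := hWmax S hS hSsub
        have hWr : Reachable F D W := .step R e W hRr heR hW hWsub hWmax
        refine ih ((W \ S).ncard) ?_ W hW hWr hSW rfl
        subst hcard
        apply Set.ncard_lt_ncard _ (Set.toFinite _)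
        constructor
        · exact fun x hx => ⟨(hWsub hx.1).1, hx.2⟩
        · intro hsub
          exact (hWsub (hsub ⟨heR, heS⟩).1).2 rfl
end

section
/- Let Y ∈ ℕ^{n×m} and M ∈ ℝ^{n×m}, and let F be the (nonempty) family of supports of all Kirchhoff matrices A for which some pair (D, A) is a linearly conjugate realization of (Y, M). Then: (i) F has a maximum element D₀ under inclusion (the support of the dense realization); (ii) for every R ∈ F and every pair e ∈ R, the subfamily {W ∈ F : W ⊆ R \ {e}} is either empty or has a maximum element; and consequently (iii) every member of F belongs to the smallest collection that contains D₀ and is closed under passing from a member R and a pair e ∈ R to the maximum of {W ∈ F : W ⊆ R \ {e}} whenever this subfamily is nonempty. Hence the iterative constrained-dense-realization procedure enumerates all reaction graph structures of linearly conjugate realizations. -/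
/-!
Adding two linearly conjugate realizations of `(Y, M)` gives another one, and since off-diagonal
entries are nonnegative the support of the sum is the union of the supports. So the family of
realizable supports is closed under unions, and so is each subfamily `{W | W ⊆ U}`; a nonempty
finite union-closed family contains its union, which is then its maximum. The dense support is the
maximum of the whole family, and any realizable `S` is reached from it: while `S ⊊ R`, removing
an edge `e ∈ R \ S` and passing to the maximum below `R \ {e}` keeps `S` below and strictly
shrinks `R`.
-/

open Set

theorem SupClosed.isGreatest_sSup {α : Type*} [CompleteLattice α] {s : Set α} (hs : SupClosed s)
    (hfin : s.Finite) (hne : s.Nonempty) : IsGreatest s (sSup s) :=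
  ⟨hs.sSup_mem_of_nonempty hfin hne subset_rfl, fun _ ha => le_sSup ha⟩

theorem supClosed_Iic {α : Type*} [SemilatticeSup α] (a : α) : SupClosed (Iic a) :=
  fun _ hb _ hc => sup_le hb hc

theorem SupClosed.mem_of_subset_of_greatest_sdiff_singleton_mem {α : Type*} [Finite α]
    {G P : Set (Set α)} (hG : SupClosed G)
    (hstep : ∀ R ∈ P, ∀ e ∈ R, ∀ W, IsGreatest (G ∩ Iic (R \ {e})) W → W ∈ P) :
    ∀ R ∈ P, ∀ S ∈ G, S ⊆ R → S ∈ P := by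
  intro R
  induction R using WellFoundedLT.induction with
  | _ R ih =>
    intro hR S hS hSR
    obtain rfl | hSR := hSR.eq_or_ssubset
    · exact hR
    obtain ⟨e, heR, heS⟩ := exists_of_ssubset hSR
    have hSe : S ∈ G ∩ Iic (R \ {e}) := ⟨hS, subset_sdiff_singleton hSR.subset heS⟩
    have hW := (hG.inter (supClosed_Iic _)).isGreatest_sSup (toFinite _) ⟨S, hSe⟩
    exact ih _ (hW.1.2.trans_ssubset (sdiff_singleton_ssubset.2 heR))
      (hstep R hR e heR _ hW) S hS (hW.2 hSe)

section Realizations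

variable {n m : ℕ}

theorem IsKirchhoff.add {A B : Matrix (Fin m) (Fin m) ℝ} (hA : IsKirchhoff A)
    (hB : IsKirchhoff B) : IsKirchhoff (A + B) :=
  ⟨fun i j hij => add_nonneg (hA.1 i j hij) (hB.1 i j hij),
    fun j => by simp [Finset.sum_add_distrib, hA.2 j, hB.2 j]⟩

theorem kirchhoffSupport_add {A B : Matrix (Fin m) (Fin m) ℝ}
    (hA : ∀ i j, i ≠ j → 0 ≤ A i j) (hB : ∀ i j, i ≠ j → 0 ≤ B i j) :
    kirchhoffSupport (A + B) = kirchhoffSupport A ∪ kirchhoffSupport B := by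
  ext ⟨i, j⟩
  simp only [kirchhoffSupport, mem_ofPred_eq, mem_union, Matrix.add_apply, ← and_or_left]
  refine and_congr_right fun hij => ?_
  have := hA i j hij
  have := hB i j hij
  constructor
  · intro h
    by_contra! h'
    linarith
  · rintro (h | h) <;> linarith

theorem IsLinConjReal.add {Y : Matrix (Fin n) (Fin m) ℕ} {M : Matrix (Fin n) (Fin m) ℝ}
    {D₁ D₂ : Matrix (Fin n) (Fin n) ℝ} {A₁ A₂ : Matrix (Fin m) (Fin m) ℝ}
    (h₁ : IsLinConjReal Y M D₁ A₁) (h₂ : IsLinConjReal Y M D₂ A₂) :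
    IsLinConjReal Y M (D₁ + D₂) (A₁ + A₂) :=
  ⟨h₁.1.add h₂.1, fun i => add_pos (h₁.2.1 i) (h₂.2.1 i), h₁.2.2.1.add h₂.2.2.1, by
    rw [Matrix.mul_add, Matrix.add_mul, h₁.2.2.2, h₂.2.2.2]⟩

def linConjSupports (Y : Matrix (Fin n) (Fin m) ℕ) (M : Matrix (Fin n) (Fin m) ℝ) :
    Set (Set (Fin m × Fin m)) :=
  {S | ∃ D A, IsLinConjReal Y M D A ∧ kirchhoffSupport A = S}

theorem supClosed_linConjSupports (Y : Matrix (Fin n) (Fin m) ℕ)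
    (M : Matrix (Fin n) (Fin m) ℝ) : SupClosed (linConjSupports Y M) := by
  rintro _ ⟨D₁, A₁, h₁, rfl⟩ _ ⟨D₂, A₂, h₂, rfl⟩
  exact ⟨D₁ + D₂, A₁ + A₂, h₁.add h₂, kirchhoffSupport_add h₁.2.2.1.1 h₂.2.2.1.1⟩

end Realizations

theorem algorithm_enumerates_all_linConj_structures {n m : ℕ}
    (Y : Matrix (Fin n) (Fin m) ℕ) (M : Matrix (Fin n) (Fin m) ℝ)
    (F : Set (Set (Fin m × Fin m)))
    (hF : F = {S | ∃ D A, IsLinConjReal Y M D A ∧ kirchhoffSupport A = S})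
    (hne : F.Nonempty) :
    ∃ D₀ ∈ F, (∀ S ∈ F, S ⊆ D₀) ∧
      (∀ R ∈ F, ∀ e ∈ R,
        (∀ W ∈ F, ¬ W ⊆ R \ {e}) ∨
        (∃ W ∈ F, W ⊆ R \ {e} ∧ ∀ W' ∈ F, W' ⊆ R \ {e} → W' ⊆ W)) ∧
      (∀ P : Set (Set (Fin m × Fin m)), D₀ ∈ P →
        (∀ R ∈ P, ∀ e ∈ R, ∀ W ∈ F, W ⊆ R \ {e} →
          (∀ W' ∈ F, W' ⊆ R \ {e} → W' ⊆ W) → W ∈ P) →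
        ∀ S ∈ F, S ∈ P) := by
  have hG : SupClosed F := hF ▸ supClosed_linConjSupports Y M
  obtain ⟨hD₀, hmax⟩ := hG.isGreatest_sSup (toFinite F) hne
  refine ⟨sSup F, hD₀, hmax, fun R _ e _ => ?_, fun P hP hstep S hS => ?_⟩
  · by_cases hbelow : (F ∩ Iic (R \ {e})).Nonempty
    · obtain ⟨⟨hWF, hWle⟩, hWmax⟩ :=
        (hG.inter (supClosed_Iic _)).isGreatest_sSup (toFinite _) hbelow
      exact Or.inr ⟨_, hWF, hWle, fun W' hW'F hW'le => hWmax ⟨hW'F, hW'le⟩⟩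
    · exact Or.inl fun W hWF hWle => hbelow ⟨W, hWF, hWle⟩
  · refine hG.mem_of_subset_of_greatest_sdiff_singleton_mem (fun R hR e he W hW => ?_) _ hP S hS
      (hmax hS)
    exact hstep R hR e he W hW.1.1 hW.1.2 fun W' hW'F hW'le => hW.2 ⟨hW'F, hW'le⟩
end

section
/- Let Y ∈ ℕ^{n×m} and M ∈ ℝ^{n×m}. For each column index j, let P_j denote the set of supports of feasible j-th columns, i.e., sets of the form {i : i ≠ j, v_i > 0} where v ∈ ℝ^m satisfies v_i ≥ 0 for i ≠ j, the entries of v sum to zero, and Y·v equals the j-th column of M. Then the set of supports of Kirchhoff matrices A with Y·A = M equals the set of all unions ⋃_j {(i, j) : i ∈ S_j} over choices (S_1, …, S_m) ∈ P_1 × ⋯ × P_m, and in particular the number of distinct reaction graph structures of dynamically equivalent realizations equals the product over j of the cardinalities of the P_j. -/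
/-- The set of supports of feasible j-th columns. -/
def colSupports {n m : ℕ} (Y : Matrix (Fin n) (Fin m) ℕ) (M : Matrix (Fin n) (Fin m) ℝ)
    (j : Fin m) : Set (Set (Fin m)) :=
  {S | ∃ v : Fin m → ℝ, (∀ i, i ≠ j → 0 ≤ v i) ∧ (∑ i, v i = 0) ∧
    ((Y.map (Nat.cast : ℕ → ℝ)).mulVec v = fun i => M i j) ∧ S = {i | i ≠ j ∧ 0 < v i}}

open Set

section Gluing

variable {α β : Type*}

def supportOfColumns (S : β → Set α) : Set (α × β) :=
  {p | p.1 ∈ S p.2}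

theorem supportOfColumns_injective : Function.Injective (supportOfColumns : (β → Set α) → _) :=
  fun _ _ h => funext fun j => Set.ext fun i => Set.ext_iff.mp h (i, j)

end Gluing

theorem Set.ncard_univ_pi {ι : Type*} [Fintype ι] {α : ι → Type*} (s : ∀ i, Set (α i)) :
    (Set.pi univ s).ncard = ∏ i, (s i).ncard := by
  rw [← Nat.card_coe_set_eq, Nat.card_congr (Equiv.Set.univPi s), Nat.card_pi]
  simp only [Nat.card_coe_set_eq]

open Matrix in
theorem Matrix.mul_eq_iff_mulVec_col {l m o R : Type*} [Fintype m] [NonUnitalNonAssocSemiring R]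
    (B : Matrix l m R) (A : Matrix m o R) (C : Matrix l o R) :
    B * A = C ↔ ∀ j, B *ᵥ (fun i => A i j) = fun i => C i j :=
  ⟨fun h j => funext fun i => congrFun (congrFun h i) j,
    fun h => Matrix.ext fun i j => congrFun (h j) i⟩

section Realizations

variable {n m : ℕ} {Y : Matrix (Fin n) (Fin m) ℕ} {M : Matrix (Fin n) (Fin m) ℝ}

def columnSupport (A : Matrix (Fin m) (Fin m) ℝ) (j : Fin m) : Set (Fin m) :=
  {i | i ≠ j ∧ 0 < A i j}

theorem kirchhoffSupport_eq_supportOfColumns (A : Matrix (Fin m) (Fin m) ℝ) :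
    kirchhoffSupport A = supportOfColumns (columnSupport A) :=
  rfl

theorem columnSupport_mem_colSupports {A : Matrix (Fin m) (Fin m) ℝ} (hA : IsKirchhoff A)
    (hYA : Y.map (Nat.cast : ℕ → ℝ) * A = M) (j : Fin m) :
    columnSupport A j ∈ colSupports Y M j :=
  ⟨fun i => A i j, fun i hij => hA.1 i j hij, hA.2 j,
    (Matrix.mul_eq_iff_mulVec_col _ _ _).mp hYA j, rfl⟩

theorem exists_isKirchhoff_columnSupport_eq {S : Fin m → Set (Fin m)}
    (hS : ∀ j, S j ∈ colSupports Y M j) :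
    ∃ A : Matrix (Fin m) (Fin m) ℝ, IsKirchhoff A ∧ Y.map (Nat.cast : ℕ → ℝ) * A = M ∧
      columnSupport A = S := by
  choose v hv_nonneg hv_sum hv_eq hv_supp using hS
  exact ⟨Matrix.of fun i j => v j i, ⟨fun i j hij => hv_nonneg j i hij, hv_sum⟩,
    (Matrix.mul_eq_iff_mulVec_col _ _ _).mpr hv_eq, funext fun j => (hv_supp j).symm⟩

theorem realizationSupports_eq_image :
    {S | ∃ A : Matrix (Fin m) (Fin m) ℝ, IsKirchhoff A ∧
        Y.map (Nat.cast : ℕ → ℝ) * A = M ∧ kirchhoffSupport A = S} =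
      supportOfColumns '' Set.pi univ (colSupports Y M) := by
  ext T
  constructor
  · rintro ⟨A, hA, hYA, rfl⟩
    exact ⟨columnSupport A, fun j _ => columnSupport_mem_colSupports hA hYA j, rfl⟩
  · rintro ⟨S, hS, rfl⟩
    obtain ⟨A, hA, hYA, hAS⟩ := exists_isKirchhoff_columnSupport_eq fun j => hS j (mem_univ j)
    exact ⟨A, hA, hYA, by rw [kirchhoffSupport_eq_supportOfColumns, hAS]⟩

end Realizations

theorem dyneq_structures_product {n m : ℕ}
    (Y : Matrix (Fin n) (Fin m) ℕ) (M : Matrix (Fin n) (Fin m) ℝ) :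
    ({S | ∃ A : Matrix (Fin m) (Fin m) ℝ, IsKirchhoff A ∧
        (Y.map (Nat.cast : ℕ → ℝ)) * A = M ∧ kirchhoffSupport A = S} =
      {T | ∃ S : Fin m → Set (Fin m), (∀ j, S j ∈ colSupports Y M j) ∧
        T = {p : Fin m × Fin m | p.1 ∈ S p.2}}) ∧
    ({S | ∃ A : Matrix (Fin m) (Fin m) ℝ, IsKirchhoff A ∧
        (Y.map (Nat.cast : ℕ → ℝ)) * A = M ∧ kirchhoffSupport A = S}.ncard =
      ∏ j, (colSupports Y M j).ncard) := by
  rw [realizationSupports_eq_image]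
  refine ⟨?_, ?_⟩
  · ext T
    simp only [mem_image, mem_univ_pi, mem_ofPred_eq, eq_comm (a := T)]
    rfl
  · rw [ncard_image_of_injective _ supportOfColumns_injective, ncard_univ_pi]
end
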